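/- arXiv:2506.24080 — 2 statements merged into one kernel-verified Lean document; each statement's English description precedes it below -/
import Mathlib

section
/- A finite simple graph G admits a link-irregular labeling if and only if for every pair of distinct vertices x, y of G, either the links L(x) and L(y) are non-isomorphic as graphs, or the edge sets E(L(x)) and E(L(y)) (viewed as sets of edges of G) are not equal. -/
/-! If `L(x) ≅ L(y)` and `E(L(x)) = E(L(y))`, the two links have the same non-isolated vertices
and the same edges, and differ only in their isolated vertices, which any graph isomorphism
matches up. Fixing the common part and using the isomorphism on the isolated vertices gives an
isomorphism of labeled links for every labeling. Conversely, an isomorphism of labeled links under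
an injective labeling sends every edge of `L(x)` to itself, so it forces `E(L(x)) = E(L(y))`;
hence an injective labeling is link-irregular as soon as the condition holds. -/

open SimpleGraph

variable {V : Type*}

/-- Two vertices have isomorphic labeled links: an equivalence of neighborhoods preserving
adjacency and edge labels. -/
def LabeledLinkIso (G : SimpleGraph V) (ℓ : Sym2 V → ℕ+) (u v : V) : Prop :=
  ∃ e : (G.neighborSet u) ≃ (G.neighborSet v),
    (∀ a b : G.neighborSet u, G.Adj a.1 b.1 ↔ G.Adj (e a).1 (e b).1) ∧
    (∀ a b : G.neighborSet u, G.Adj a.1 b.1 → ℓ s(a.1, b.1) = ℓ s((e a).1, (e b).1))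

/-- An edge labeling is link-irregular if distinct vertices have non-isomorphic labeled links. -/
def IsLinkIrregular (G : SimpleGraph V) (ℓ : Sym2 V → ℕ+) : Prop :=
  ∀ u v : V, u ≠ v → ¬ LabeledLinkIso G ℓ u v

/-- A graph admits a link-irregular labeling. -/
def HasLinkIrregularLabeling (G : SimpleGraph V) : Prop :=
  ∃ ℓ : Sym2 V → ℕ+, IsLinkIrregular G ℓ

/-- The link-irregular labeling number η(G): the minimum number of distinct labels used
on the edges of G over all link-irregular labelings, or ∞ if none exists. -/
noncomputable def linkIrregularNumber (G : SimpleGraph V) : ℕ∞ :=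
  sInf {c : ℕ∞ | ∃ ℓ : Sym2 V → ℕ+, IsLinkIrregular G ℓ ∧ c = ((ℓ '' G.edgeSet).ncard : ℕ∞)}

/-- The edge set of the link of x, viewed as a set of edges of G. -/
def linkEdgeSet (G : SimpleGraph V) (x : V) : Set (Sym2 V) :=
  {e | e ∈ G.edgeSet ∧ ∀ v ∈ e, v ∈ G.neighborSet x}

/-- Active neighborhood. -/
def activeNeighborSet (G : SimpleGraph V) (x : V) : Set V :=
  {u ∈ G.neighborSet x | ∃ w ∈ G.neighborSet x, G.Adj u w}

/-- A graph is cut-irregular if distinct vertex-deleted subgraphs are non-isomorphic. -/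
def CutIrregular (H : SimpleGraph V) : Prop :=
  ∀ u v : V, u ≠ v → ¬ Nonempty ((H.induce ({u} : Set V)ᶜ) ≃g (H.induce ({v} : Set V)ᶜ))

/-- The wheel graph W_n: a cycle C_n together with a universal vertex. -/
def wheelGraph (n : ℕ) : SimpleGraph (Option (Fin n)) where
  Adj x y :=
    match x, y with
    | none, none => False
    | none, some _ => True
    | some _, none => True
    | some i, some j => (cycleGraph n).Adj i j
  symm := by
    constructor
    rintro (_|i) (_|j) h
    · exact h
    · trivial
    · trivial
    · exact (cycleGraph n).symm.symm _ _ h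
  loopless := by
    constructor
    rintro (_|i) h
    · exact h
    · exact (cycleGraph n).loopless.irrefl i h

/-- The join of two graphs. -/
def graphJoin {W : Type*} (G : SimpleGraph V) (H : SimpleGraph W) : SimpleGraph (V ⊕ W) where
  Adj x y :=
    match x, y with
    | Sum.inl a, Sum.inl b => G.Adj a b
    | Sum.inr a, Sum.inr b => H.Adj a b
    | _, _ => True
  symm := by
    constructor
    rintro (a|a) (b|b) h
    · exact G.symm.symm _ _ h
    · trivial
    · trivial
    · exact H.symm.symm _ _ h
  loopless := by
    constructor
    rintro (a|a) h
    · exact G.loopless.irrefl a h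
    · exact H.loopless.irrefl a h

/-- The hypercube graph Q_n. -/
def hypercubeGraph (n : ℕ) : SimpleGraph (Fin n → Bool) where
  Adj x y := (Finset.univ.filter fun i => x i ≠ y i).card = 1
  symm := by
    constructor
    intro x y h
    have : (Finset.univ.filter fun i => y i ≠ x i) = (Finset.univ.filter fun i => x i ≠ y i) := by
      apply Finset.filter_congr
      intro i _
      simp [ne_comm]
    rw [this]
    exact h
  loopless := by
    constructor
    intro x h
    simp at h

theorem Equiv.exists_eq_of_pos_of_neg {α β : Type*} {p : α → Prop} {q : β → Prop}
    (f : {a // p a} ≃ {b // q b}) (g : {a // ¬p a} ≃ {b // ¬q b}) :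
    ∃ e : α ≃ β, (∀ a (h : p a), e a = f ⟨a, h⟩) ∧ ∀ a (h : ¬p a), e a = g ⟨a, h⟩ := by
  classical
  refine ⟨(sumCompl p).symm.trans ((sumCongr f g).trans (sumCompl q)), fun a h => ?_,
    fun a h => ?_⟩
  · simp [sumCompl_symm_apply_of_pos h]
  · simp [sumCompl_symm_apply_of_neg h]

namespace SimpleGraph

theorem Iso.apply_mem_support_iff {W : Type*} {G : SimpleGraph V} {H : SimpleGraph W}
    (φ : G ≃g H) (v : V) : φ v ∈ H.support ↔ v ∈ G.support := by
  simp only [mem_support]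
  exact ⟨fun ⟨w, hw⟩ => ⟨φ.symm w, by simpa using φ.symm.map_adj_iff.mpr hw⟩,
    fun ⟨w, hw⟩ => ⟨φ w, φ.map_adj_iff.mpr hw⟩⟩

end SimpleGraph

section Link

variable (G : SimpleGraph V)

theorem mk_mem_linkEdgeSet_iff {x a b : V} :
    s(a, b) ∈ linkEdgeSet G x ↔ G.Adj a b ∧ a ∈ G.neighborSet x ∧ b ∈ G.neighborSet x := by
  simp [linkEdgeSet]

theorem mem_activeNeighborSet_of_adj {x a b : V} (ha : a ∈ G.neighborSet x)
    (hb : b ∈ G.neighborSet x) (hab : G.Adj a b) : a ∈ activeNeighborSet G x :=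
  ⟨ha, b, hb, hab⟩

theorem mem_activeNeighborSet_iff_exists_mk_mem_linkEdgeSet {x u : V} :
    u ∈ activeNeighborSet G x ↔ ∃ w, s(u, w) ∈ linkEdgeSet G x := by
  simp only [mk_mem_linkEdgeSet_iff, activeNeighborSet, Set.mem_ofPred_eq]
  grind

theorem activeNeighborSet_eq_of_linkEdgeSet_eq {x y : V}
    (h : linkEdgeSet G x = linkEdgeSet G y) : activeNeighborSet G x = activeNeighborSet G y := by
  ext u
  simp only [mem_activeNeighborSet_iff_exists_mk_mem_linkEdgeSet, h]

theorem coe_mem_activeNeighborSet_iff {x : V} (a : G.neighborSet x) :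
    a.1 ∈ activeNeighborSet G x ↔ a ∈ (G.induce (G.neighborSet x)).support :=
  ⟨fun ⟨_, w, hw, h⟩ => ⟨⟨w, hw⟩, h⟩, fun ⟨w, h⟩ => ⟨a.2, w.1, w.2, h⟩⟩

theorem labeledLinkIso_of_iso_of_linkEdgeSet_eq {x y : V}
    (φ : G.induce (G.neighborSet x) ≃g G.induce (G.neighborSet y))
    (hE : linkEdgeSet G x = linkEdgeSet G y) (ℓ : Sym2 V → ℕ+) : LabeledLinkIso G ℓ x y := by
  have hS := activeNeighborSet_eq_of_linkEdgeSet_eq G hE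
  set S := activeNeighborSet G x
  let f : {a : G.neighborSet x // a.1 ∈ S} ≃ {b : G.neighborSet y // b.1 ∈ S} :=
    { toFun a := ⟨⟨a.1, (hS ▸ a.2 : a.1.1 ∈ activeNeighborSet G y).1⟩, a.2⟩
      invFun b := ⟨⟨b.1, b.2.1⟩, b.2⟩ }
  let g : {a : G.neighborSet x // a.1 ∉ S} ≃ {b : G.neighborSet y // b.1 ∉ S} :=
    φ.toEquiv.subtypeEquiv fun a => by
      have h := (φ.apply_mem_support_iff a).not
      rw [← coe_mem_activeNeighborSet_iff, ← coe_mem_activeNeighborSet_iff, ← hS] at h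
      exact h.symm
  obtain ⟨e, he_fix, he_iso⟩ := Equiv.exists_eq_of_pos_of_neg f g
  have hfix : ∀ a, a.1 ∈ S → (e a).1 = a.1 := fun a h => by rw [he_fix a h]; rfl
  have hmem : ∀ a, (e a).1 ∈ S → a.1 ∈ S := fun a h => by
    by_contra ha
    exact (he_iso a ha ▸ (g ⟨a, ha⟩).2) h
  have hmemx : ∀ {a b : G.neighborSet x}, G.Adj a b → a.1 ∈ S ∧ b.1 ∈ S := fun {a b} h =>
    ⟨mem_activeNeighborSet_of_adj G a.2 b.2 h, mem_activeNeighborSet_of_adj G b.2 a.2 h.symm⟩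
  refine ⟨e, fun a b => ⟨fun h => ?_, fun h => ?_⟩, fun a b h => ?_⟩
  · rwa [hfix a (hmemx h).1, hfix b (hmemx h).2]
  · have ha : a.1 ∈ S := hmem a (hS ▸ mem_activeNeighborSet_of_adj G (e a).2 (e b).2 h)
    have hb : b.1 ∈ S := hmem b (hS ▸ mem_activeNeighborSet_of_adj G (e b).2 (e a).2 h.symm)
    rwa [hfix a ha, hfix b hb] at h
  · rw [hfix a (hmemx h).1, hfix b (hmemx h).2]

namespace LabeledLinkIso

variable {G} {ℓ : Sym2 V → ℕ+} {x y : V}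

theorem symm (h : LabeledLinkIso G ℓ x y) : LabeledLinkIso G ℓ y x := by
  obtain ⟨e, hadj, hlab⟩ := h
  refine ⟨e.symm, fun a b => ?_, fun a b hab => ?_⟩
  · simpa using (hadj (e.symm a) (e.symm b)).symm
  · have h := hlab (e.symm a) (e.symm b)
    simp only [hadj (e.symm a) (e.symm b), Equiv.apply_symm_apply] at h
    exact (h hab).symm

theorem nonempty_iso (h : LabeledLinkIso G ℓ x y) :
    Nonempty (G.induce (G.neighborSet x) ≃g G.induce (G.neighborSet y)) :=
  let ⟨e, hadj, _⟩ := h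
  ⟨⟨e, fun {a b} => (hadj a b).symm⟩⟩

theorem linkEdgeSet_subset (h : LabeledLinkIso G ℓ x y) (hℓ : Function.Injective ℓ) :
    linkEdgeSet G x ⊆ linkEdgeSet G y := by
  obtain ⟨e, hadj, hlab⟩ := h
  refine Sym2.ind fun a b hab => ?_
  obtain ⟨hab, ha, hb⟩ := (mk_mem_linkEdgeSet_iff G).mp hab
  rw [hℓ (hlab ⟨a, ha⟩ ⟨b, hb⟩ hab), mk_mem_linkEdgeSet_iff]
  exact ⟨(hadj ⟨a, ha⟩ ⟨b, hb⟩).mp hab, (e _).2, (e _).2⟩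

theorem linkEdgeSet_eq (h : LabeledLinkIso G ℓ x y) (hℓ : Function.Injective ℓ) :
    linkEdgeSet G x = linkEdgeSet G y :=
  (h.linkEdgeSet_subset hℓ).antisymm (h.symm.linkEdgeSet_subset hℓ)

end LabeledLinkIso

end Link

/-- G admits a link-irregular labeling iff for all distinct x, y either
L(x) ≇ L(y) or E(L(x)) ≠ E(L(y)). -/
theorem stmt_0 {V : Type*} [Fintype V] (G : SimpleGraph V) :
    HasLinkIrregularLabeling G ↔
      ∀ x y : V, x ≠ y →
        (¬ Nonempty ((G.induce (G.neighborSet x)) ≃g (G.induce (G.neighborSet y)))) ∨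
        linkEdgeSet G x ≠ linkEdgeSet G y := by
  constructor
  · rintro ⟨ℓ, hℓ⟩ x y hxy
    by_contra! ⟨⟨φ⟩, hE⟩
    exact hℓ x y hxy (labeledLinkIso_of_iso_of_linkEdgeSet_eq G φ hE ℓ)
  · intro h
    obtain ⟨f, hf⟩ := Countable.exists_injective_nat (Sym2 V)
    have hℓ : Function.Injective (Nat.succPNat ∘ f) := Nat.succPNat_injective.comp hf
    refine ⟨Nat.succPNat ∘ f, fun x y hxy hiso => ?_⟩
    rcases h x y hxy with hφ | hE
    · exact hφ hiso.nonempty_iso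
    · exact hE (hiso.linkEdgeSet_eq hℓ)
end

section
/- No bipartite finite simple graph on at least two vertices admits a link-irregular labeling. -/
open SimpleGraph

variable {V : Type*}

/-! In a triangle-free graph, in particular a bipartite one, every link is edgeless, so labeled
links of vertices of equal degree are isomorphic whatever the labeling. And every finite graph
on at least two vertices has two vertices of equal degree. -/

namespace SimpleGraph

variable (G : SimpleGraph V)

theorem exists_ne_degree_eq [Fintype V] [DecidableRel G.Adj] (hcard : 2 ≤ Fintype.card V) :
    ∃ u v : V, u ≠ v ∧ G.degree u = G.degree v := by
  classical
  suffices ∃ t : Finset ℕ, t.card < Fintype.card V ∧ ∀ v, G.degree v ∈ t by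
    obtain ⟨t, ht, hdeg⟩ := this
    obtain ⟨u, -, v, -, huv, h⟩ :=
      Finset.exists_ne_map_eq_of_card_lt_of_maps_to (s := Finset.univ) ht fun v _ => hdeg v
    exact ⟨u, v, huv, h⟩
  -- A universal vertex and an isolated vertex cannot coexist, so only `card V - 1` degrees occur.
  by_cases hU : ∃ w, G.IsUniversal w
  · obtain ⟨w, hw⟩ := hU
    refine ⟨Finset.Icc 1 (Fintype.card V - 1), by rw [Nat.card_Icc]; omega, fun v => ?_⟩
    have hpos : 0 < G.degree v := by
      by_cases hvw : v = w
      · subst hvw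
        rw [(G.degree_eq_card_sub_one v).2 hw]
        omega
      · exact (G.degree_pos_iff_exists_adj v).2 ⟨w, (hw (Ne.symm hvw)).symm⟩
    have := G.degree_lt_card_verts v
    simp only [Finset.mem_Icc]
    omega
  · push Not at hU
    exact ⟨Finset.range (Fintype.card V - 1), by rw [Finset.card_range]; omega,
      fun v => Finset.mem_range.2 ((G.degree_lt_card_sub_one v).2 (hU v))⟩

variable {G}

theorem labeledLinkIso_of_cliqueFree (hG : G.CliqueFree 3) (ℓ : Sym2 V → ℕ+) {u v : V}
    (e : G.neighborSet u ≃ G.neighborSet v) : LabeledLinkIso G ℓ u v := by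
  have hind := isIndepSet_neighborSet_of_triangleFree G hG
  have hnadj : ∀ (x : V) (a b : G.neighborSet x), ¬ G.Adj a b := fun x a b hab =>
    hind x a.2 b.2 hab.ne hab
  exact ⟨e, fun a b => iff_of_false (hnadj u a b) (hnadj v (e a) (e b)),
    fun a b hab => absurd hab (hnadj u a b)⟩

theorem not_hasLinkIrregularLabeling_of_cliqueFree [Fintype V] (hG : G.CliqueFree 3)
    (hcard : 2 ≤ Fintype.card V) : ¬ HasLinkIrregularLabeling G := by
  classical
  rintro ⟨ℓ, hℓ⟩
  obtain ⟨u, v, huv, hdeg⟩ := G.exists_ne_degree_eq hcard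
  have hcard_link : Fintype.card (G.neighborSet u) = Fintype.card (G.neighborSet v) := by
    simpa only [card_neighborSet_eq_degree] using hdeg
  obtain ⟨e⟩ := Fintype.card_eq.1 hcard_link
  exact hℓ u v huv (labeledLinkIso_of_cliqueFree hG ℓ e)

theorem cliqueFree_three_of_adj_mem_iff_notMem {A : Set V}
    (hA : ∀ u v : V, G.Adj u v → (u ∈ A ↔ v ∉ A)) : G.CliqueFree 3 :=
  let C : G.Coloring Prop := Coloring.mk (· ∈ A) fun {u v} huv h =>
    iff_not_self (h ▸ hA u v huv)
  C.colorable.cliqueFree (by simp)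

end SimpleGraph

/-- no bipartite graph on at least two vertices admits a link-irregular labeling. -/
theorem stmt_3 {V : Type*} [Fintype V] (G : SimpleGraph V)
    (hbip : ∃ A : Set V, ∀ u v : V, G.Adj u v → (u ∈ A ↔ v ∉ A))
    (hcard : 2 ≤ Fintype.card V) :
    ¬ HasLinkIrregularLabeling G := by
  obtain ⟨A, hA⟩ := hbip
  exact not_hasLinkIrregularLabeling_of_cliqueFree (cliqueFree_three_of_adj_mem_iff_notMem hA) hcard
end
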